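/- arXiv:2309.01433 — 10 statements merged into one kernel-verified Lean document; each statement's English description precedes it below -/
import Mathlib

section
/- Soundness of rule Write1 (impossible-value assertions about a different variable are preserved by a write): Let Σ be a set and T, T', β, I ⊆ Σ × Σ relations such that T ⊆ β ⨾ I ⨾ β (instance of axiom C3 for the write transition T), I ⨾ T' ⊆ T' ⨾ I (instance of axiom SV1: interference of the write semi-commutes with the read transition T' on a different variable), and β ⨾ T' ⊆ T' ⨾ β (semi-commutation of the view-preserving simulation with T'). Then wlp(T', ∅) ⊆ wlp(T, wlp(T', ∅)), i.e. the impossible-value assertion dis(T') = wlp(T', ∅) is preserved by the write transition T. -/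
/-- Weakest liberal precondition. -/
def wlp {S : Type*} (R : Set (S × S)) (P : Set S) : Set S :=
  {σ | ∀ σ', (σ, σ') ∈ R → σ' ∈ P}

/-- Relational composition. -/
def rcomp {S : Type*} (R R' : Set (S × S)) : Set (S × S) :=
  {p | ∃ σ', (p.1, σ') ∈ R ∧ (σ', p.2) ∈ R'}

/-- Soundness of rule Write1: the impossible-value assertion
`dis(T') = wlp(T', ∅)` is preserved by the write transition `T`. -/
theorem write1_sound {S : Type*} (T T' β I : Set (S × S))
    (hC3 : T ⊆ rcomp β (rcomp I β))
    (hSV1 : rcomp I T' ⊆ rcomp T' I)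
    (hβcomm : rcomp β T' ⊆ rcomp T' β) :
    wlp T' ∅ ⊆ wlp T (wlp T' ∅) := by
  intro σ hσ σ' hT τ hT'
  obtain ⟨a, hβ1, b, hI, hβ2⟩ := hC3 hT
  have h1 : (b, τ) ∈ rcomp β T' := ⟨σ', hβ2, hT'⟩
  obtain ⟨c, hc, hcI⟩ := hβcomm h1
  have h2 : (a, c) ∈ rcomp I T' := ⟨b, hI, hc⟩
  obtain ⟨d, hd, _⟩ := hSV1 h2
  have h3 : (σ, d) ∈ rcomp β T' := ⟨a, hβ1, hd⟩
  obtain ⟨e, he, _⟩ := hβcomm h3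
  exact hσ e he
end

section
/- Soundness of rule Write2 (definite-value assertions about a different variable are preserved by a write): Let Σ be a set, Val a type of values, T, β, I ⊆ Σ × Σ relations and T' : Val → (Σ × Σ → Prop) a family of relations (the read transitions of thread t' for each value of variable y). Assume T ⊆ β ⨾ I ⨾ β, and for every value u: I ⨾ T'(u) ⊆ T'(u) ⨾ I and β ⨾ T'(u) ⊆ T'(u) ⨾ β. Define the definite-value assertion E(v) := ⋂_{u ≠ v} wlp(T'(u), ∅). Then for every value v, E(v) ⊆ wlp(T, E(v)). -/
/-- Soundness of rule Write2: definite-value assertions about a different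
variable are preserved by a write. -/
theorem write2_sound {S Val : Type*} (T β I : Set (S × S))
    (T' : Val → Set (S × S))
    (hC3 : T ⊆ rcomp β (rcomp I β))
    (hSV1 : ∀ u, rcomp I (T' u) ⊆ rcomp (T' u) I)
    (hβcomm : ∀ u, rcomp β (T' u) ⊆ rcomp (T' u) β) :
    ∀ v : Val, (⋂ u, ⋂ (_ : u ≠ v), wlp (T' u) ∅) ⊆
      wlp T (⋂ u, ⋂ (_ : u ≠ v), wlp (T' u) ∅) := by
  intro v σ hσ σ' hTσ
  simp only [Set.mem_iInter] at hσ ⊢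
  intro u hu τ hτ
  obtain ⟨a, hσa, b, hab, hbσ'⟩ := hC3 hTσ
  obtain ⟨c, hbc, _⟩ := hβcomm u (show (b, τ) ∈ rcomp β (T' u) from ⟨σ', hbσ', hτ⟩)
  obtain ⟨d, had, _⟩ := hSV1 u (show (a, c) ∈ rcomp I (T' u) from ⟨b, hab, hbc⟩)
  obtain ⟨e, hσe, _⟩ := hβcomm u (show (σ, d) ∈ rcomp β (T' u) from ⟨a, hσa, had⟩)
  exact hσ u hu e hσe
end

section
/- Soundness of rule Write4 (maximal-value assertions about a different variable are preserved by a write): Let Σ be a set, Val a type of values, T, β, I ⊆ Σ × Σ relations and T' : Val → (Σ × Σ → Prop) a family of relations. Assume T ⊆ β ⨾ I ⨾ β, for every value u: I ⨾ T'(u) ⊆ T'(u) ⨾ I and β ⨾ T'(u) ⊆ T'(u) ⨾ β, and let V ⊆ Σ (the maximal-view predicate) satisfy V ⊆ wlp(β, V) and V ⊆ wlp(I, V). Define E(v) := ⋂_{u ≠ v} wlp(T'(u), ∅). Then for every value v, E(v) ∩ V ⊆ wlp(T, E(v) ∩ V). -/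
/-- Soundness of rule Write4: maximal-value assertions about a different
variable are preserved by a write. -/
theorem write4_sound {S Val : Type*} (T β I : Set (S × S))
    (T' : Val → Set (S × S)) (V : Set S)
    (hC3 : T ⊆ rcomp β (rcomp I β))
    (hSV1 : ∀ u, rcomp I (T' u) ⊆ rcomp (T' u) I)
    (hβcomm : ∀ u, rcomp β (T' u) ⊆ rcomp (T' u) β)
    (hVβ : V ⊆ wlp β V) (hVI : V ⊆ wlp I V) :
    ∀ v : Val, (⋂ u, ⋂ (_ : u ≠ v), wlp (T' u) ∅) ∩ V ⊆
      wlp T ((⋂ u, ⋂ (_ : u ≠ v), wlp (T' u) ∅) ∩ V) := by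
  intro v σ hσ σ' hT
  obtain ⟨hE, hV⟩ := hσ
  obtain ⟨a, hβ1, b, hI, hβ2⟩ := hC3 hT
  have hVa : a ∈ V := hVβ hV a hβ1
  have hVb : b ∈ V := hVI hVa b hI
  have hV' : σ' ∈ V := hVβ hVb σ' hβ2
  refine ⟨?_, hV'⟩
  simp only [Set.mem_iInter] at hE ⊢
  intro u hu τ hτ
  obtain ⟨x, hbx, _⟩ := hβcomm u (show (b,τ) ∈ rcomp β (T' u) from ⟨σ', hβ2, hτ⟩)
  obtain ⟨y, hay, _⟩ := hSV1 u (show (a,x) ∈ rcomp I (T' u) from ⟨b, hI, hbx⟩)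
  obtain ⟨z, hσz, _⟩ := hβcomm u (show (σ,y) ∈ rcomp β (T' u) from ⟨a, hβ1, hay⟩)
  exact hE u hu z hσz
end

section
/- Soundness of rule Write6 (a thread writing value v to x afterwards has maximal value v for x): Let Σ be a set, Val a type of values, Tw ⊆ Σ × Σ a relation (the write-v transition of thread t) and Tr : Val → (Σ × Σ → Prop) a family of relations (the read transitions of thread t for each value of x). Let V ⊆ Σ (the maximal-view predicate of t on x) and define E(u) := ⋂_{u' ≠ u} wlp(Tr(u'), ∅). Assume: (1) V ⊆ wlp(Tw, V) (view-maximality is preserved by the write, as provided by axioms C3 and C4); (2) Σ ⊆ wlp(Tw, dom(Tr(v))) where dom(R) := {σ | ∃ σ'. (σ, σ') ∈ R} (instance of axiom RW5: after writing v the thread can read v); (3) V ⊆ ⋃_{u} E(u) (instance of axiom RW6: a view-maximal thread has a definite value). Then V ⊆ wlp(Tw, E(v) ∩ V); in particular, for every value u, E(u) ∩ V ⊆ wlp(Tw, E(v) ∩ V). -/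
/-- Domain of a relation. -/
def rdom {S : Type*} (R : Set (S × S)) : Set S :=
  {σ | ∃ σ', (σ, σ') ∈ R}

/-- Soundness of rule Write6: a thread writing value `v` to `x` afterwards
has maximal value `v` for `x`. -/
theorem write6_sound {S Val : Type*} (Tw : Set (S × S))
    (Tr : Val → Set (S × S)) (V : Set S) (v : Val)
    (h1 : V ⊆ wlp Tw V)
    (h2 : (Set.univ : Set S) ⊆ wlp Tw (rdom (Tr v)))
    (h3 : V ⊆ ⋃ u, ⋂ u', ⋂ (_ : u' ≠ u), wlp (Tr u') ∅) :
    V ⊆ wlp Tw ((⋂ u', ⋂ (_ : u' ≠ v), wlp (Tr u') ∅) ∩ V) ∧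
      ∀ u : Val, (⋂ u', ⋂ (_ : u' ≠ u), wlp (Tr u') ∅) ∩ V ⊆
        wlp Tw ((⋂ u', ⋂ (_ : u' ≠ v), wlp (Tr u') ∅) ∩ V) := by
  have main : V ⊆ wlp Tw ((⋂ u', ⋂ (_ : u' ≠ v), wlp (Tr u') ∅) ∩ V) := by
    intro σ hσ σ' hstep
    have hV' : σ' ∈ V := h1 hσ σ' hstep
    have hdom : σ' ∈ rdom (Tr v) := h2 (Set.mem_univ σ) σ' hstep
    obtain ⟨u, hu⟩ := Set.mem_iUnion.mp (h3 hV')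
    have huv : u = v := by
      by_contra hne
      obtain ⟨τ, hτ⟩ := hdom
      have : σ' ∈ wlp (Tr v) ∅ := by
        have := Set.mem_iInter.mp hu v
        exact Set.mem_iInter.mp this (fun h => hne h.symm)
      exact this τ hτ
    exact ⟨huv ▸ hu, hV'⟩
  exact ⟨main, fun u => fun σ hσ => main hσ.2⟩
end

section
/- Soundness of rule ConWrite2 (message passing, abstract form): Let Σ be a set, Tw, Tr ⊆ Σ × Σ relations (the synchronized write-v transition of thread t on x and the synchronized read-v transition of thread t' on x), and Y, Y', E, M' ⊆ Σ predicates (Y the maximal-view predicate of t on y, Y' that of t' on y, E the definite-value assertion [y ≡ u]_t, M' the maximal-value assertion [y = u]_{t'}). Define D := wlp(Tr, ∅). Assume: (1) Y ∩ wlp(Tr, Y') ⊆ wlp(Tw, wlp(Tr, Y')) (the instance of the message-passing axiom MP); (2) Y ⊆ wlp(Tw, Y) and Y ⊆ wlp(Tr, Y) (stability of Y under the write and the read); (3) E ⊆ wlp(Tw, E) and E ⊆ wlp(Tr, E) (stability of E under the write and the read); (4) Y ∩ E ∩ Y' ⊆ M' (a state where t is view-maximal on y with definite value u and t' is view-maximal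 on y satisfies [y = u]_{t'}). Then D ∩ Y ∩ E ⊆ wlp(Tw, wlp(Tr, M')), i.e. {[x ≉ v]_{t'} ∩ [y = u]_t} x :=^{WS}_t v {⟨x = v⟩^S [y = u]_{t'}} since ⟨x = v⟩^S [y = u]_{t'} := wlp(Tr, M'). -/
/-- Soundness of rule ConWrite2 (message passing, abstract form). -/
theorem conwrite2_sound {S : Type*} (Tw Tr : Set (S × S))
    (Y Y' E M' : Set S)
    (hMP : Y ∩ wlp Tr Y' ⊆ wlp Tw (wlp Tr Y'))
    (hYw : Y ⊆ wlp Tw Y) (hYr : Y ⊆ wlp Tr Y)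
    (hEw : E ⊆ wlp Tw E) (hEr : E ⊆ wlp Tr E)
    (h4 : Y ∩ E ∩ Y' ⊆ M') :
    wlp Tr ∅ ∩ Y ∩ E ⊆ wlp Tw (wlp Tr M') := by
  rintro σ ⟨⟨hD, hY⟩, hE⟩ σ' hw σ'' hr
  exact h4 ⟨⟨hYr (hYw hY σ' hw) σ'' hr, hEr (hEw hE σ' hw) σ'' hr⟩,
    hMP ⟨hY, fun τ h => absurd (hD τ h) (by simp)⟩ σ' hw σ'' hr⟩
end

section
/- Soundness of rule Read2: Let Σ be a set, Val a type of values, Tr : Val → (Σ × Σ → Prop) a family of relations (the transitions of thread t reading value u of variable x into register r), and reg : Σ → Val a function giving the value of register r in each state. Assume the read semantics: for all u and all (σ, σ') ∈ Tr(u), reg(σ') = u. Then for all values v and v': wlp(Tr(v), ∅) ⊆ wlp(Tr(v'), {σ | reg(σ) ≠ v}). That is, if thread t cannot read value v for x (assertion [x ≉ v]_t), then after any read of x into r the register r does not hold v. -/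
/-- Soundness of rule Read2: if thread `t` cannot read value `v` for `x`,
then after any read of `x` into `r` the register `r` does not hold `v`. -/
theorem read2_sound {S Val : Type*} (Tr : Val → Set (S × S)) (reg : S → Val)
    (hread : ∀ u (σ σ' : S), (σ, σ') ∈ Tr u → reg σ' = u) :
    ∀ v v' : Val, wlp (Tr v) ∅ ⊆ wlp (Tr v') {σ | reg σ ≠ v} := by
  intro v v' σ hσ σ' hstep hreg
  have hv : reg σ' = v' := hread v' σ σ' hstep
  exact hσ σ' (hreg ▸ hv ▸ hstep)
end

section
/- Soundness of rule Read3: Let Σ be a set, Val a type of values, Tr : Val → (Σ × Σ → Prop) a family of relations (the transitions of thread t reading value u of variable x into register r), and reg : Σ → Val a function giving the value of register r in each state. Assume for all u and all (σ, σ') ∈ Tr(u), reg(σ') = u. Define E(v) := ⋂_{u ≠ v} wlp(Tr(u), ∅). Then for all values v and v': E(v) ⊆ wlp(Tr(v'), {σ | reg(σ) = v}). That is, if thread t definitely reads value v for x, then after reading x into register r the register holds v. -/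
/-- Soundness of rule Read3: if thread `t` definitely reads value `v` for `x`,
then after reading `x` into register `r` the register holds `v`. -/
theorem read3_sound {S Val : Type*} (Tr : Val → Set (S × S)) (reg : S → Val)
    (hread : ∀ u (σ σ' : S), (σ, σ') ∈ Tr u → reg σ' = u) :
    ∀ v v' : Val, (⋂ u, ⋂ (_ : u ≠ v), wlp (Tr u) ∅) ⊆
      wlp (Tr v') {σ | reg σ = v} := by
  intro v v' σ hσ σ' hstep
  by_cases h : v' = v
  · exact h ▸ hread v' σ σ' hstep
  · exact absurd hstep (by simpa using (Set.mem_iInter₂.mp hσ v' h σ'))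
end

section
/- Soundness of rules ConRead1 and ConRead2: Let Σ be a set, Val a type of values, Tr : Val → (Σ × Σ → Prop) a family of relations (the transitions of thread t reading value u of a variable into register r), and reg : Σ → Val a function giving the value of register r in each state. Assume for all u and all (σ, σ') ∈ Tr(u), reg(σ') = u. Then for every predicate M ⊆ Σ and all values v and v': wlp(Tr(v), M) ⊆ wlp(Tr(v'), {σ | reg(σ) ≠ v} ∪ M). Taking M = [x = v]_t this is rule ConRead1 for the conditional observation ⟨x = v⟩[x = v]_t := wlp(Tr(v), M); taking the synchronized read family and M = [y = u]_t this is rule ConRead2 for ⟨x = v⟩^S[y = u]_t := wlp(Tr(v), M). -/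
/-- Soundness of rules ConRead1 and ConRead2. -/
theorem conread_sound {S Val : Type*} (Tr : Val → Set (S × S)) (reg : S → Val)
    (hread : ∀ u (σ σ' : S), (σ, σ') ∈ Tr u → reg σ' = u) :
    ∀ (M : Set S) (v v' : Val),
      wlp (Tr v) M ⊆ wlp (Tr v') ({σ | reg σ ≠ v} ∪ M) := by
  intro M v v' σ hσ σ' hstep
  by_cases h : v' = v
  · exact Or.inr (hσ σ' (h ▸ hstep))
  · exact Or.inl (by simpa [hread v' σ σ' hstep] using h)
end

section
/- Soundness of rule Fence3 (abstract form): Let Σ be a set, Val a type of values, F ⊆ Σ × Σ a relation (the fence transition of thread t), M, X' ⊆ Σ predicates (M the maximal-value assertion [x = v]_t, X' the maximal-view predicate x↑_{t'} of another thread t'), E' : Val → Set Σ a family of predicates (E'(u) the definite-value assertion [x ≡ u]_{t'}), and v a value. Assume: (1) M ⊆ wlp(F, M) (stability of M under the fence, as provided by Fence1 from axioms C3, SV1, SV2); (2) M ⊆ wlp(F, X') (the fence makes t' view-maximal, as provided by axiom FNC); (3) X' ⊆ ⋃_{u} E'(u) (instance of axiom RW6); (4) for all u ≠ v, M ∩ E'(u)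 = ∅ (the consequence of axiom C2: two view-maximal threads with definite values for x agree on the value). Then M ⊆ wlp(F, X' ∩ E'(v)), i.e. {[x = v]_t} fnc_t {[x = v]_{t'}}. -/
/-- Soundness of rule Fence3 (abstract form):
`{[x = v]_t} fnc_t {[x = v]_{t'}}`. -/
theorem fence3_sound {S Val : Type*} (F : Set (S × S))
    (M X' : Set S) (E' : Val → Set S) (v : Val)
    (h1 : M ⊆ wlp F M)
    (h2 : M ⊆ wlp F X')
    (h3 : X' ⊆ ⋃ u, E' u)
    (h4 : ∀ u, u ≠ v → M ∩ E' u = ∅) :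
    M ⊆ wlp F (X' ∩ E' v) := by
  intro σ hσ σ' hF
  have hM' : σ' ∈ M := h1 hσ σ' hF
  have hX' : σ' ∈ X' := h2 hσ σ' hF
  obtain ⟨_, ⟨u, rfl⟩, hu⟩ := h3 hX'
  by_cases h : u = v
  · exact ⟨hX', h ▸ hu⟩
  · exact absurd (Set.mem_inter hM' hu) (by simp [h4 u h])
end

section
/- Correctness of the WRC read step (the Hoare triple {r₁ ≠ 1 ∪ ⟨y = 1⟩^S[x = 1]₃} r₂ :=^{RS}₃ y {r₁ ≠ 1 ∪ r₂ ≠ 1 ∪ [x = 1]₃} in abstract form): Let Σ be a set, Val a type of values with a distinguished value 1, Tr : Val → (Σ × Σ → Prop) a family of relations (the synchronized read transitions of thread 3 reading value u of y into register r₂), reg₁, reg₂ : Σ → Val functions giving the values of registers r₁ and r₂, and M ⊆ Σ a predicate (the assertion [x = 1]₃). Assume: for all u and all (σ, σ') ∈ Tr(u), reg₂(σ') = u and reg₁(σ') = reg₁(σ). Then for every value u: {σ | reg₁(σ) ≠ 1} ∪ wlp(Tr(1), M) ⊆ wlp(Tr(u), {σ | reg₁(σ) ≠ 1} ∪ {σ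 | reg₂(σ) ≠ 1} ∪ M). -/
/-- Correctness of the WRC read step: the Hoare triple
`{r₁ ≠ 1 ∪ ⟨y = 1⟩^S[x = 1]₃} r₂ :=^{RS}₃ y {r₁ ≠ 1 ∪ r₂ ≠ 1 ∪ [x = 1]₃}`
in abstract form. -/
theorem wrc_read_sound {S Val : Type*} [One Val]
    (Tr : Val → Set (S × S)) (reg₁ reg₂ : S → Val) (M : Set S)
    (hread : ∀ u (σ σ' : S), (σ, σ') ∈ Tr u →
      reg₂ σ' = u ∧ reg₁ σ' = reg₁ σ) :
    ∀ u : Val, {σ | reg₁ σ ≠ 1} ∪ wlp (Tr 1) M ⊆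
      wlp (Tr u) ({σ | reg₁ σ ≠ 1} ∪ {σ | reg₂ σ ≠ 1} ∪ M) := by
  intro u σ hσ σ' hstep
  obtain ⟨h2, h1⟩ := hread u σ σ' hstep
  rcases hσ with hσ | hσ
  · exact Or.inl (Or.inl (by simpa [h1] using hσ))
  · by_cases hu : u = 1
    · exact Or.inr (hσ σ' (hu ▸ hstep))
    · exact Or.inl (Or.inr (by simpa [h2] using hu))
end
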